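/- arXiv:math/0408398 — 4 statements merged into one kernel-verified Lean document; each statement's English description precedes it below -/
import Mathlib

section
/- For all integers m, n ≥ 1, the extended Bernoulli numbers satisfy the symmetry C_{m,n} = (-1)^{m+n} · C_{n,m}. -/
open Finset

private def gsum (a : ℕ → ℚ) (n : ℕ) : ℚ :=
  ∑ j ∈ range n, (-1 : ℚ) ^ (n + j) * (n.choose j : ℚ) * a j

private def Aext (m j : ℕ) : ℚ :=
  bernoulli (m + j) + (if m + j = 1 then 1 else 0)

private def Sfull (m n : ℕ) : ℚ :=
  ∑ j ∈ range (n + 1), (n.choose j : ℚ) * bernoulli (m + j)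

private lemma neg_one_pow_bernoulli (k : ℕ) :
    (-1 : ℚ) ^ k * bernoulli k = bernoulli k + (if k = 1 then 1 else 0) := by
  rcases eq_or_ne k 1 with rfl | hk
  · norm_num [bernoulli_one]
  · rw [if_neg hk, add_zero, ← bernoulli'_eq_bernoulli,
      bernoulli_eq_bernoulli'_of_ne_one hk]

private lemma neg_one_pow_sub {i n : ℕ} (h : i ≤ n) :
    (-1 : ℚ) ^ (n - i) = (-1) ^ n * (-1) ^ i := by
  have h1 : (-1 : ℚ) ^ n = (-1) ^ (n - i) * (-1) ^ i := by
    rw [← pow_add, Nat.sub_add_cancel h]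
  have h2 : ((-1 : ℚ) ^ i) * ((-1) ^ i) = 1 := by
    rw [← pow_add, ← two_mul, pow_mul]; norm_num
  calc (-1 : ℚ) ^ (n - i) = (-1) ^ (n - i) * (((-1 : ℚ) ^ i) * ((-1) ^ i)) := by rw [h2, mul_one]
    _ = (-1) ^ n * (-1) ^ i := by rw [← mul_assoc, ← h1]

private lemma sum_choose_bernoulli (k : ℕ) :
    ∑ j ∈ range (k + 1), (k.choose j : ℚ) * bernoulli j = (-1) ^ k * bernoulli k := by
  rw [sum_range_succ, sum_bernoulli, Nat.choose_self, neg_one_pow_bernoulli]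
  push_cast
  ring

private lemma Sfull_pascal (m n : ℕ) : Sfull m (n + 1) = Sfull m n + Sfull (m + 1) n := by
  have h4 : ∀ i : ℕ, m + (i + 1) = (m + 1) + i := by omega
  have h1 : Sfull m (n + 1)
      = (∑ i ∈ range (n + 1), ((n + 1).choose (i + 1) : ℚ) * bernoulli (m + (i + 1)))
        + bernoulli m := by
    rw [Sfull, sum_range_succ']
    simp
  have h2 : ∑ i ∈ range (n + 1), ((n + 1).choose (i + 1) : ℚ) * bernoulli (m + (i + 1))
      = (∑ i ∈ range (n + 1), (n.choose i : ℚ) * bernoulli ((m + 1) + i))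
        + ∑ i ∈ range (n + 1), (n.choose (i + 1) : ℚ) * bernoulli (m + (i + 1)) := by
    rw [← sum_add_distrib]
    refine sum_congr rfl fun i _ => ?_
    rw [Nat.choose_succ_succ, h4 i]
    push_cast
    ring
  have h5 : ∑ i ∈ range (n + 1), (n.choose (i + 1) : ℚ) * bernoulli (m + (i + 1))
      = ∑ i ∈ range n, (n.choose (i + 1) : ℚ) * bernoulli (m + (i + 1)) := by
    rw [sum_range_succ, Nat.choose_succ_self]
    simp
  have h3 : Sfull m n = (∑ i ∈ range n, (n.choose (i + 1) : ℚ) * bernoulli (m + (i + 1)))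
      + bernoulli m := by
    rw [Sfull, sum_range_succ']
    simp
  have h6 : Sfull (m + 1) n = ∑ i ∈ range (n + 1), (n.choose i : ℚ) * bernoulli ((m + 1) + i) := rfl
  rw [h1, h2, h5, h3, h6]
  ring

private lemma Sfull_symm (m n : ℕ) : Sfull m n = (-1) ^ (m + n) * Sfull n m := by
  induction n generalizing m with
  | zero =>
    have h0 : Sfull m 0 = bernoulli m := by simp [Sfull]
    have h1 : Sfull 0 m = (-1) ^ m * bernoulli m := by
      rw [Sfull]
      simp_rw [Nat.zero_add]
      exact sum_choose_bernoulli m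
    rw [h0, h1, ← mul_assoc, ← pow_add]
    have : (-1 : ℚ) ^ (m + 0 + m) = 1 := by
      have : m + 0 + m = 2 * m := by omega
      rw [this, pow_mul]; norm_num
    rw [this, one_mul]
  | succ n ih =>
    have hp : Sfull (n + 1) m = Sfull n (m + 1) - Sfull n m := by
      rw [Sfull_pascal]; ring
    rw [Sfull_pascal, ih m, ih (m + 1), hp]
    have e1 : m + (n + 1) = (m + n) + 1 := by omega
    have e2 : (m + 1) + n = (m + n) + 1 := by omega
    rw [e1, e2, pow_succ]
    ring

private lemma gsum_closed (m n : ℕ) :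
    gsum (Aext m) n = (-1) ^ (m + n) * (Sfull m n - bernoulli (m + n)) := by
  have hterm : ∀ j, (-1 : ℚ) ^ (n + j) * (n.choose j : ℚ) * Aext m j
      = (-1) ^ (m + n) * ((n.choose j : ℚ) * bernoulli (m + j)) := by
    intro j
    have h1 : Aext m j = (-1 : ℚ) ^ (m + j) * bernoulli (m + j) :=
      (neg_one_pow_bernoulli (m + j)).symm
    rw [h1]
    have h2 : (-1 : ℚ) ^ (n + j) * (-1 : ℚ) ^ (m + j) = (-1) ^ (m + n) := by
      rw [← pow_add]
      have : n + j + (m + j) = (m + n) + 2 * j := by omega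
      rw [this, pow_add, pow_mul]; norm_num
    calc (-1 : ℚ) ^ (n + j) * (n.choose j : ℚ) * ((-1 : ℚ) ^ (m + j) * bernoulli (m + j))
        = ((-1 : ℚ) ^ (n + j) * (-1 : ℚ) ^ (m + j)) * ((n.choose j : ℚ) * bernoulli (m + j)) := by
          ring
      _ = (-1) ^ (m + n) * ((n.choose j : ℚ) * bernoulli (m + j)) := by rw [h2]
  have hS : ∑ j ∈ range n, (n.choose j : ℚ) * bernoulli (m + j)
      = Sfull m n - bernoulli (m + n) := by
    rw [Sfull, sum_range_succ, Nat.choose_self]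
    push_cast; ring
  rw [gsum]
  simp_rw [hterm]
  rw [← mul_sum, hS]

private lemma bernoulli_neg_one_pow {k : ℕ} (hk : k ≠ 1) :
    (-1 : ℚ) ^ k * bernoulli k = bernoulli k := by
  rw [neg_one_pow_bernoulli, if_neg hk, add_zero]

private lemma neg_one_pow_sq (k : ℕ) : (-1 : ℚ) ^ k * (-1 : ℚ) ^ k = 1 := by
  rw [← pow_add, ← two_mul, pow_mul]; norm_num

private lemma gsum_symm (m n : ℕ) (hm : 1 ≤ m) (hn : 1 ≤ n) :
    gsum (Aext m) n = (-1) ^ (m + n) * gsum (Aext n) m := by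
  rw [gsum_closed, gsum_closed]
  have e : n + m = m + n := by omega
  rw [e]
  have hb : (-1 : ℚ) ^ (m + n) * bernoulli (m + n) = bernoulli (m + n) :=
    bernoulli_neg_one_pow (by omega)
  have hsq := neg_one_pow_sq (m + n)
  rw [Sfull_symm m n]
  linear_combination bernoulli (m + n) * hsq - hb

private lemma gsum_A1 (n : ℕ) (hn : 1 ≤ n) : gsum (Aext 1) n = bernoulli n := by
  rw [gsum_closed, Sfull_symm 1 n]
  have h1 : Sfull n 1 = bernoulli n + bernoulli (n + 1) := by
    rw [Sfull]
    rw [show (1 : ℕ) + 1 = 2 from rfl]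
    rw [sum_range_succ, sum_range_one]
    norm_num
  have e : 1 + n = n + 1 := by omega
  rw [e, h1]
  have hb : (-1 : ℚ) ^ (n + 1) * bernoulli (n + 1) = bernoulli (n + 1) :=
    bernoulli_neg_one_pow (by omega)
  have hsq := neg_one_pow_sq (n + 1)
  linear_combination (bernoulli n + bernoulli (n + 1)) * hsq - hb

private lemma choose_swap {N k j : ℕ} (h : k + j ≤ N) :
    N.choose k * (N - k).choose j = N.choose j * (N - j).choose k := by
  have h1 := Nat.choose_mul (n := N) (k := k + j) (s := k) (Nat.le_add_right k j)
  have h2 := Nat.choose_mul (n := N) (k := k + j) (s := j) (Nat.le_add_left j k)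
  rw [Nat.add_sub_cancel_left] at h1
  rw [Nat.add_sub_cancel] at h2
  have h3 : (k + j).choose k = (k + j).choose j := Nat.choose_symm_add
  rw [h3] at h1
  omega

private lemma tri_swap (f : ℕ → ℕ → ℚ) (n : ℕ) :
    ∑ i ∈ range n, ∑ j ∈ range (n - i), f i j
      = ∑ j ∈ range n, ∑ i ∈ range (n - j), f i j := by
  have key : ∀ (F : ℕ → ℕ → ℚ),
      (∑ i ∈ range n, ∑ j ∈ range (n - i), F i j)
        = ∑ i ∈ range n, ∑ j ∈ range n, if i + j < n then F i j else 0 := by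
    intro F
    refine sum_congr rfl fun i hi => ?_
    rw [mem_range] at hi
    have h1 : ∑ j ∈ range n, (if i + j < n then F i j else 0)
        = ∑ j ∈ range (n - i), (if i + j < n then F i j else 0) := by
      refine (sum_subset ?_ ?_).symm
      · intro x hx; rw [mem_range] at *; omega
      · intro x _ hx2; rw [mem_range] at hx2; rw [if_neg (by omega)]
    rw [h1]
    refine sum_congr rfl fun j hj => ?_
    rw [mem_range] at hj
    rw [if_pos (by omega)]
  rw [key, key fun j i => f i j, sum_comm]
  refine sum_congr rfl fun j _ => sum_congr rfl fun i _ => ?_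
  rw [Nat.add_comm j i]

private lemma inner_eval (n j : ℕ) (hj : j < n) :
    ∑ i ∈ range (n - j), ((n + 1).choose (i + 1) : ℚ) * bernoulli (i + 1)
        * ((-1 : ℚ) ^ ((n - i) + j) * ((n - i).choose j : ℚ))
      = -((-1 : ℚ) ^ (n + j)) * ((n + 1).choose j : ℚ) * ((n : ℚ) - (j : ℚ)) := by
  have hstep : ∀ i ∈ range (n - j),
      ((n + 1).choose (i + 1) : ℚ) * bernoulli (i + 1)
          * ((-1 : ℚ) ^ ((n - i) + j) * ((n - i).choose j : ℚ))
        = -((-1 : ℚ) ^ (n + j)) * ((n + 1).choose j : ℚ)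
            * (((n + 1 - j).choose (i + 1) : ℚ) * bernoulli' (i + 1)) := by
    intro i hi
    rw [mem_range] at hi
    have hin : i ≤ n := by omega
    have hsign : (-1 : ℚ) ^ ((n - i) + j) = (-1) ^ n * (-1) ^ i * (-1) ^ j := by
      rw [pow_add, neg_one_pow_sub hin]
    have hb' : bernoulli' (i + 1) = (-1) ^ (i + 1) * bernoulli (i + 1) :=
      bernoulli'_eq_bernoulli (i + 1)
    have hch : ((n + 1).choose (i + 1)) * ((n - i).choose j)
        = ((n + 1).choose j) * ((n + 1 - j).choose (i + 1)) := by
      have h := choose_swap (N := n + 1) (k := i + 1) (j := j) (by omega)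
      have : n + 1 - (i + 1) = n - i := by omega
      rw [this] at h
      exact h
    have hchQ : ((n + 1).choose (i + 1) : ℚ) * ((n - i).choose j : ℚ)
        = ((n + 1).choose j : ℚ) * ((n + 1 - j).choose (i + 1) : ℚ) := by
      exact_mod_cast congrArg (Nat.cast (R := ℚ)) hch
    rw [hsign, hb']
    have expand : ((n + 1).choose (i + 1) : ℚ) * bernoulli (i + 1)
          * ((-1 : ℚ) ^ n * (-1) ^ i * (-1) ^ j * ((n - i).choose j : ℚ))
        = (((n + 1).choose (i + 1) : ℚ) * ((n - i).choose j : ℚ))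
            * ((-1 : ℚ) ^ n * (-1) ^ j) * ((-1 : ℚ) ^ i * bernoulli (i + 1)) := by ring
    rw [expand, hchQ]
    have hsgn2 : (-1 : ℚ) ^ n * (-1 : ℚ) ^ j = (-1 : ℚ) ^ (n + j) := by rw [pow_add]
    rw [hsgn2]
    have : (-1 : ℚ) ^ (i + 1) = -((-1 : ℚ) ^ i) := by rw [pow_succ]; ring
    rw [this]
    ring
  rw [sum_congr rfl hstep, ← mul_sum]
  rw [show n + 1 - j = n - j + 1 from by omega]
  have hsum : ∑ i ∈ range (n - j), ((n - j + 1).choose (i + 1) : ℚ) * bernoulli' (i + 1)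
      = (n : ℚ) - (j : ℚ) := by
    have h := sum_bernoulli' ((n - j) + 1)
    rw [sum_range_succ'] at h
    simp only [Nat.choose_zero_right, Nat.cast_one, bernoulli'_zero, one_mul, mul_one] at h
    have : ((n - j) + 1 : ℕ) = (n - j : ℕ) + 1 := rfl
    have hcast : (((n - j) + 1 : ℕ) : ℚ) = ((n : ℚ) - (j : ℚ)) + 1 := by
      push_cast [Nat.cast_sub (le_of_lt hj)]
      ring
    rw [hcast] at h
    linarith
  rw [hsum]

private lemma gsum_rec (a : ℕ → ℚ) (n : ℕ) (hn : 1 ≤ n) :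
    (n : ℚ) * gsum a (n + 1)
        - (∑ k ∈ Finset.Icc 1 n, ((n + 1).choose k : ℚ) * bernoulli k * gsum a (n - k + 1))
      = ((n : ℚ) + 1) * gsum (fun j => a (j + 1)) n := by
  -- rewrite the Icc sum as a double range sum
  have hIcc : ∑ k ∈ Finset.Icc 1 n, ((n + 1).choose k : ℚ) * bernoulli k * gsum a (n - k + 1)
      = ∑ i ∈ range n, ∑ j ∈ range (n - i),
          ((n + 1).choose (i + 1) : ℚ) * bernoulli (i + 1)
            * ((-1 : ℚ) ^ ((n - i) + j) * ((n - i).choose j : ℚ)) * a j := by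
    rw [← Finset.Ico_add_one_right_eq_Icc, sum_Ico_eq_sum_range]
    simp only [Nat.add_sub_cancel]
    refine sum_congr rfl fun i hi => ?_
    rw [mem_range] at hi
    have h1 : n - (1 + i) + 1 = n - i := by omega
    have h2 : 1 + i = i + 1 := by omega
    rw [h1, h2, gsum, mul_sum]
    refine sum_congr rfl fun j _ => ?_
    ring
  rw [hIcc, tri_swap]
  have hinner : ∀ j ∈ range n,
      (∑ i ∈ range (n - j),
          ((n + 1).choose (i + 1) : ℚ) * bernoulli (i + 1)
            * ((-1 : ℚ) ^ ((n - i) + j) * ((n - i).choose j : ℚ)) * a j)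
        = -((-1 : ℚ) ^ (n + j)) * ((n + 1).choose j : ℚ) * ((n : ℚ) - (j : ℚ)) * a j := by
    intro j hj
    rw [mem_range] at hj
    rw [← sum_mul, inner_eval n j hj]
  rw [sum_congr rfl hinner]
  -- expand gsum a (n+1)
  have hexp : (n : ℚ) * gsum a (n + 1)
      = (∑ j ∈ range n, (n : ℚ) * ((-1 : ℚ) ^ (n + 1 + j) * ((n + 1).choose j : ℚ) * a j))
        + (n : ℚ) * ((-1 : ℚ) ^ (n + 1 + n) * ((n + 1).choose n : ℚ) * a n) := by
    rw [gsum, mul_sum, sum_range_succ]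
  rw [hexp]
  have hcomb : (∑ j ∈ range n, (n : ℚ) * ((-1 : ℚ) ^ (n + 1 + j) * ((n + 1).choose j : ℚ) * a j))
      - (∑ j ∈ range n, -((-1 : ℚ) ^ (n + j)) * ((n + 1).choose j : ℚ) * ((n : ℚ) - (j : ℚ)) * a j)
      = ∑ j ∈ range n, -((j : ℚ) * ((-1 : ℚ) ^ (n + j) * ((n + 1).choose j : ℚ) * a j)) := by
    rw [← sum_sub_distrib]
    refine sum_congr rfl fun j _ => ?_
    have : (-1 : ℚ) ^ (n + 1 + j) = -((-1 : ℚ) ^ (n + j)) := by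
      have : n + 1 + j = (n + j) + 1 := by omega
      rw [this, pow_succ]; ring
    rw [this]
    ring
  have hrearr : ∀ (X Y Z : ℚ), (X + Z) - Y = (X - Y) + Z := fun X Y Z => by ring
  rw [hrearr, hcomb]
  -- now reindex the sum ∑_{j ∈ range n} -(j * ...) using sum_range_succ'
  obtain ⟨p, hp⟩ : ∃ p, n = p + 1 := ⟨n - 1, by omega⟩
  subst hp
  rw [sum_range_succ']
  simp only [Nat.cast_zero, zero_mul, neg_zero, add_zero]
  -- RHS
  rw [gsum, mul_sum, sum_range_succ]
  have hfinal : ∀ i ∈ range p,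
      -(((i + 1 : ℕ) : ℚ) * ((-1 : ℚ) ^ (p + 1 + (i + 1)) * (((p + 1) + 1).choose (i + 1) : ℚ) * a (i + 1)))
        = (((p + 1 : ℕ) : ℚ) + 1) * ((-1 : ℚ) ^ (p + 1 + i) * ((p + 1).choose i : ℚ) * a (i + 1)) := by
    intro i hi
    have hch : ((p + 1) + 1) * ((p + 1).choose i) = ((p + 1) + 1).choose (i + 1) * (i + 1) :=
      Nat.add_one_mul_choose_eq (p + 1) i
    have hchQ : (((p + 1) + 1 : ℕ) : ℚ) * (((p + 1).choose i : ℕ) : ℚ)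
        = ((((p + 1) + 1).choose (i + 1) : ℕ) : ℚ) * ((i + 1 : ℕ) : ℚ) := by
      exact_mod_cast congrArg (Nat.cast (R := ℚ)) hch
    have hs : (-1 : ℚ) ^ (p + 1 + (i + 1)) = -((-1 : ℚ) ^ (p + 1 + i)) := by
      have : p + 1 + (i + 1) = (p + 1 + i) + 1 := by omega
      rw [this, pow_succ]; ring
    rw [hs]
    push_cast at hchQ ⊢
    linear_combination (-((-1 : ℚ) ^ (p + 1 + i)) * a (i + 1)) * hchQ
  rw [sum_congr rfl hfinal]
  congr 1
  have c1 : (((p + 1) + 1).choose (p + 1) : ℚ) = (p : ℚ) + 2 := by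
    rw [Nat.choose_succ_self_right]; push_cast; ring
  have c2 : ((p + 1).choose p : ℚ) = (p : ℚ) + 1 := by
    rw [Nat.choose_succ_self_right]; push_cast; ring
  have s1 : (-1 : ℚ) ^ (p + 1 + 1 + (p + 1)) = -1 := Odd.neg_one_pow ⟨p + 1, by omega⟩
  have s2 : (-1 : ℚ) ^ (p + 1 + p) = -1 := Odd.neg_one_pow ⟨p, by omega⟩
  rw [c1, c2, s1, s2]
  push_cast
  ring

/-- The extended Bernoulli numbers `C m n` (defined for `m, n ≥ 1` by `C 1 n = Bₙ` and the
recursion `C (m+1) n = (n/(n+1)) ⬝ C m (n+1) − (1/(n+1)) ∑_{k=1}^{n} (n+1 choose k) Bₖ C m (n−k+1)`)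
satisfy the symmetry `C m n = (-1)^(m+n) ⬝ C n m`. -/
theorem extended_bernoulli_symm (C : ℕ → ℕ → ℚ)
    (hbase : ∀ n, 1 ≤ n → C 1 n = bernoulli n)
    (hrec : ∀ m n, 1 ≤ m → 1 ≤ n →
      C (m + 1) n = (n / (n + 1) : ℚ) * C m (n + 1)
        - (1 / (n + 1) : ℚ) * ∑ k ∈ Finset.Icc 1 n,
            ((n + 1).choose k : ℚ) * bernoulli k * C m (n - k + 1))
    (m n : ℕ) (hm : 1 ≤ m) (hn : 1 ≤ n) :
    C m n = (-1) ^ (m + n) * C n m := by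
  have closed : ∀ m, 1 ≤ m → ∀ n, 1 ≤ n → C m n = gsum (Aext m) n := by
    intro m hm
    induction m, hm using Nat.le_induction with
    | base => intro n hn; rw [hbase n hn, gsum_A1 n hn]
    | succ m hm ih =>
      intro n hn
      rw [hrec m n hm hn]
      have hs : ∑ k ∈ Finset.Icc 1 n, ((n + 1).choose k : ℚ) * bernoulli k * C m (n - k + 1)
          = ∑ k ∈ Finset.Icc 1 n,
              ((n + 1).choose k : ℚ) * bernoulli k * gsum (Aext m) (n - k + 1) :=
        sum_congr rfl fun k _ => by rw [ih (n - k + 1) (by omega)]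
      rw [hs, ih (n + 1) (by omega)]
      have hne : ((n : ℚ) + 1) ≠ 0 := by positivity
      have h := gsum_rec (Aext m) n hn
      have hshift : (fun j => Aext m (j + 1)) = Aext (m + 1) := by
        funext j
        have : m + (j + 1) = m + 1 + j := by omega
        simp [Aext, this]
      rw [hshift] at h
      have expand : ((n : ℚ) / ((n : ℚ) + 1)) * gsum (Aext m) (n + 1)
          - (1 / ((n : ℚ) + 1)) * ∑ k ∈ Finset.Icc 1 n,
              ((n + 1).choose k : ℚ) * bernoulli k * gsum (Aext m) (n - k + 1)
          = ((n : ℚ) * gsum (Aext m) (n + 1)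
              - ∑ k ∈ Finset.Icc 1 n,
                  ((n + 1).choose k : ℚ) * bernoulli k * gsum (Aext m) (n - k + 1))
              / ((n : ℚ) + 1) := by
        field_simp
      push_cast at expand ⊢
      rw [expand, h, mul_comm, mul_div_assoc, div_self hne, mul_one]
  rw [closed m hm n hn, closed n hn m hm, gsum_symm m n hm hn]
end

section
/- Let F₃ be the free Lie algebra over ℂ on three generators a = t¹², b = t²³, c = t¹³, and let I be the Lie ideal of F₃ generated by the three elements ⁅a, b + c⁆, ⁅b, c + a⁆, ⁅c, a + b⁆ (the relations [tⁱʲ, tʲᵏ + tᵏⁱ] = 0 for pairwise distinct i, j, k ∈ {1,2,3}, where tʲⁱ = tⁱʲ). Then the quotient Lie algebra F₃/I is isomorphic, as a Lie algebra over ℂ, to the product of the one-dimensional abelian Lie algebra ℂ and the free Lie algebra over ℂ on two generators; under this isomorphism the central one-dimensional factor is generated by the image of a + b + c and the free factor by the images of a and b. -/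
/-!
Since `⁅a, b + c⁆ = ⁅a, a + b + c⁆` and cyclically, the relations say exactly that
`s = a + b + c` commutes with the generators, i.e. that `s` is central in the quotient.
With `x`, `y` the generators of `F₂`, the assignment `a ↦ (0, x)`, `b ↦ (0, y)`,
`c ↦ (1, -(x + y))` kills the relations because it sends `s` to `(1, 0)`, which is central
in `ℂ × F₂`. Its inverse is `(r, u) ↦ r • s + φ u` with `φ : x ↦ a, y ↦ b`, a Lie hom
precisely because `s` is central.
-/

attribute [local instance 100] LieRing.ofAssociativeRing

instance prodLieRing {L M : Type*} [LieRing L] [LieRing M] : LieRing (L × M) where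
  bracket x y := (⁅x.1, y.1⁆, ⁅x.2, y.2⁆)
  add_lie x y z := Prod.ext (add_lie x.1 y.1 z.1) (add_lie x.2 y.2 z.2)
  lie_add x y z := Prod.ext (lie_add x.1 y.1 z.1) (lie_add x.2 y.2 z.2)
  lie_self x := Prod.ext (lie_self x.1) (lie_self x.2)
  leibniz_lie x y z := Prod.ext (leibniz_lie x.1 y.1 z.1) (leibniz_lie x.2 y.2 z.2)

instance prodLieAlgebra {R L M : Type*} [CommRing R] [LieRing L] [LieRing M]
    [LieAlgebra R L] [LieAlgebra R M] : LieAlgebra R (L × M) where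
  lie_smul t x y := Prod.ext (lie_smul t x.1 y.1) (lie_smul t x.2 y.2)

namespace LieIdeal

variable {R L M : Type*} [CommRing R] [LieRing L] [LieAlgebra R L] [LieRing M] [LieAlgebra R M]
  (I : LieIdeal R L)

def mkQ : L →ₗ⁅R⁆ L ⧸ I :=
  { LieSubmodule.Quotient.mk' I with map_lie' := rfl }

theorem mkQ_surjective : Function.Surjective I.mkQ :=
  LieSubmodule.Quotient.surjective_mk' I

theorem quotient_lieHom_ext {f g : L ⧸ I →ₗ⁅R⁆ M} (h : f.comp I.mkQ = g.comp I.mkQ) : f = g :=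
  LieHom.ext fun q => by
    obtain ⟨x, rfl⟩ := I.mkQ_surjective q
    exact LieHom.congr_fun h x

def liftQ (f : L →ₗ⁅R⁆ M) (h : I ≤ f.ker) : L ⧸ I →ₗ⁅R⁆ M where
  toLinearMap := Submodule.liftQ I.toSubmodule f.toLinearMap fun x hx => LieHom.mem_ker.mp (h hx)
  map_lie' {u v} := by
    obtain ⟨x, rfl⟩ := I.mkQ_surjective u
    obtain ⟨y, rfl⟩ := I.mkQ_surjective v
    exact f.map_lie x y

theorem mkQ_eq_zero_iff {x : L} : I.mkQ x = 0 ↔ x ∈ I :=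
  LieSubmodule.Quotient.mk_eq_zero I

end LieIdeal

noncomputable section

namespace LieHom

variable {R L₁ L₂ L : Type*} [CommRing R] [LieRing L₁] [LieAlgebra R L₁] [LieRing L₂]
  [LieAlgebra R L₂] [LieRing L] [LieAlgebra R L]

def toSpanSingleton (z : L) : R →ₗ⁅R⁆ L where
  toLinearMap := LinearMap.toSpanSingleton R L z
  map_lie' {r s} := by
    simp [commute_iff_lie_eq.mp (Commute.all r s)]

@[simp]
theorem toSpanSingleton_apply (z : L) (r : R) : toSpanSingleton z r = r • z := rfl

def coprodOfLieEqZero (f : L₁ →ₗ⁅R⁆ L) (g : L₂ →ₗ⁅R⁆ L) (h : ∀ x y, ⁅f x, g y⁆ = 0) :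
    L₁ × L₂ →ₗ⁅R⁆ L where
  toLinearMap := f.toLinearMap.coprod g.toLinearMap
  map_lie' {p q} := by
    have h' : ⁅g p.2, f q.1⁆ = 0 := by rw [← lie_skew, h, neg_zero]
    show f ⁅p.1, q.1⁆ + g ⁅p.2, q.2⁆ = ⁅f p.1 + g p.2, f q.1 + g q.2⁆
    simp [h, h']

end LieHom

namespace FreeLieAlgebra

variable {R X L : Type*} [CommRing R] [LieRing L] [LieAlgebra R L]

theorem lieSpan_range_of : LieSubalgebra.lieSpan R (FreeLieAlgebra R X) (Set.range (of R)) = ⊤ := by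
  set S := LieSubalgebra.lieSpan R (FreeLieAlgebra R X) (Set.range (of R))
  let g : FreeLieAlgebra R X →ₗ⁅R⁆ S :=
    lift R fun x => ⟨of R x, LieSubalgebra.subset_lieSpan ⟨x, rfl⟩⟩
  have hg : S.incl.comp g = LieHom.id := hom_ext fun x => by simp [g]
  refine eq_top_iff.mpr fun w _ => ?_
  rw [← LieHom.id_apply (R := R) w, ← hg]
  exact (g w).2

theorem lieSpan_range_comp_of_surjective {f : FreeLieAlgebra R X →ₗ⁅R⁆ L}
    (hf : Function.Surjective f) : LieSubalgebra.lieSpan R L (Set.range (f ∘ of R)) = ⊤ := by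
  rw [Set.range_comp, ← LieSubalgebra.map_lieSpan, lieSpan_range_of, ← LieSubalgebra.map_top,
    (LieHom.range_eq_top f).mpr hf]

theorem lie_eq_zero_of_surjective {f : FreeLieAlgebra R X →ₗ⁅R⁆ L} (hf : Function.Surjective f)
    {z : L} (hz : ∀ x, ⁅f (of R x), z⁆ = 0) (w : L) : ⁅w, z⁆ = 0 := by
  have h : LieDerivation.inner R L L z = 0 :=
    LieDerivation.ext_of_lieSpan_eq_top _ (lieSpan_range_comp_of_surjective hf) <| by
      rintro _ ⟨x, rfl⟩
      simpa using hz x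
  simpa using LieDerivation.congr_fun h w

end FreeLieAlgebra

theorem lie_relations_eq_range {L : Type*} [LieRing L] (t : Fin 3 → L) :
    ({⁅t 0, t 1 + t 2⁆, ⁅t 1, t 2 + t 0⁆, ⁅t 2, t 0 + t 1⁆} : Set L) =
      Set.range fun i => ⁅t i, t 0 + t 1 + t 2⁆ := by
  ext w
  simp [Fin.exists_fin_succ, eq_comm, add_comm]

namespace FreeLieAlgebra

variable (R : Type*) [CommRing R]

local notation "F₃" => FreeLieAlgebra R (Fin 3)
local notation "F₂" => FreeLieAlgebra R (Fin 2)

def centralSumIdeal : LieIdeal R F₃ :=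
  LieSubmodule.lieSpan R F₃ (Set.range fun i : Fin 3 => ⁅of R i, of R 0 + of R 1 + of R 2⁆)

def toProd : F₃ →ₗ⁅R⁆ R × F₂ :=
  lift R ![(0, of R 0), (0, of R 1), (1, -(of R 0 + of R 1))]

@[simp]
theorem toProd_of_zero : toProd R (of R 0) = (0, of R 0) := lift_of_apply ..

@[simp]
theorem toProd_of_one : toProd R (of R 1) = (0, of R 1) := lift_of_apply ..

@[simp]
theorem toProd_of_two : toProd R (of R 2) = (1, -(of R 0 + of R 1)) := lift_of_apply ..

theorem toProd_sum : toProd R (of R 0 + of R 1 + of R 2) = (1, 0) := by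
  simp

theorem centralSumIdeal_le_ker : centralSumIdeal R ≤ (toProd R).ker := by
  refine LieSubmodule.lieSpan_le.mpr (Set.range_subset_iff.mpr fun i => ?_)
  rw [SetLike.mem_coe, LieHom.mem_ker, LieHom.map_lie, toProd_sum]
  exact Prod.ext (commute_iff_lie_eq.mp (Commute.all _ _)) (lie_zero _)

local notation "Q" => F₃ ⧸ centralSumIdeal R
local notation "π" => LieIdeal.mkQ (centralSumIdeal R)

def quotientToProd : Q →ₗ⁅R⁆ R × F₂ :=
  (centralSumIdeal R).liftQ (toProd R) (centralSumIdeal_le_ker R)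

@[simp]
theorem quotientToProd_mkQ (w : F₃) : quotientToProd R (π w) = toProd R w := rfl

theorem mkQ_sum_lie_eq_zero (w : Q) : ⁅π (of R 0 + of R 1 + of R 2), w⁆ = 0 := by
  rw [← lie_skew, neg_eq_zero]
  refine lie_eq_zero_of_surjective (centralSumIdeal R).mkQ_surjective (fun i => ?_) w
  rw [← LieHom.map_lie, LieIdeal.mkQ_eq_zero_iff]
  exact LieSubmodule.subset_lieSpan ⟨i, rfl⟩

def prodToQuotient : R × F₂ →ₗ⁅R⁆ Q :=
  LieHom.coprodOfLieEqZero (LieHom.toSpanSingleton (π (of R 0 + of R 1 + of R 2)))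
    (lift R ![π (of R 0), π (of R 1)])
    fun r w => by rw [LieHom.toSpanSingleton_apply, smul_lie, mkQ_sum_lie_eq_zero, smul_zero]

@[simp]
theorem prodToQuotient_apply (p : R × F₂) :
    prodToQuotient R p =
      p.1 • π (of R 0 + of R 1 + of R 2) + lift R ![π (of R 0), π (of R 1)] p.2 :=
  rfl

theorem prodToQuotient_comp_quotientToProd :
    (prodToQuotient R).comp (quotientToProd R) = LieHom.id := by
  refine LieIdeal.quotient_lieHom_ext _ (hom_ext fun i => ?_)
  fin_cases i <;> simp [lift_of_apply]
  abel

theorem quotientToProd_comp_prodToQuotient :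
    (quotientToProd R).comp (prodToQuotient R) = LieHom.id := by
  refine LieHom.prod_ext _ _ _ (LieHom.ext fun r => ?_) (hom_ext fun i => ?_)
  · simp
  · fin_cases i <;> simp [lift_of_apply]

def quotientEquivProd : Q ≃ₗ⁅R⁆ R × F₂ :=
  { quotientToProd R with
    invFun := prodToQuotient R
    left_inv := LieHom.congr_fun (prodToQuotient_comp_quotientToProd R)
    right_inv := LieHom.congr_fun (quotientToProd_comp_prodToQuotient R) }

end FreeLieAlgebra

end

/-- The quotient of the free Lie algebra on three generators `a = t¹²`, `b = t²³`, `c = t¹³`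
by the Lie ideal generated by `⁅a, b + c⁆`, `⁅b, c + a⁆`, `⁅c, a + b⁆` is isomorphic to the
product of the one-dimensional abelian Lie algebra `ℂ` and the free Lie algebra on two
generators; the central factor is generated by the image of `a + b + c` and the free factor
by the images of `a` and `b`. -/
theorem quotient_freeLie3_iso_prod :
    ∀ (a b c : FreeLieAlgebra ℂ (Fin 3)),
      a = FreeLieAlgebra.of ℂ 0 → b = FreeLieAlgebra.of ℂ 1 → c = FreeLieAlgebra.of ℂ 2 →
      ∀ I : LieIdeal ℂ (FreeLieAlgebra ℂ (Fin 3)),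
        I = LieSubmodule.lieSpan ℂ (FreeLieAlgebra ℂ (Fin 3))
              {⁅a, b + c⁆, ⁅b, c + a⁆, ⁅c, a + b⁆} →
        ∃ e : (FreeLieAlgebra ℂ (Fin 3) ⧸ I) ≃ₗ⁅ℂ⁆ (ℂ × FreeLieAlgebra ℂ (Fin 2)),
          e (LieSubmodule.Quotient.mk (N := I) (a + b + c)) = (1, 0) ∧
          e (LieSubmodule.Quotient.mk (N := I) a) = (0, FreeLieAlgebra.of ℂ 0) ∧
          e (LieSubmodule.Quotient.mk (N := I) b) = (0, FreeLieAlgebra.of ℂ 1) := by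
  intro a b c ha hb hc I hI
  subst ha hb hc
  obtain rfl : I = FreeLieAlgebra.centralSumIdeal ℂ := by
    rw [hI, lie_relations_eq_range (FreeLieAlgebra.of ℂ)]
    rfl
  exact ⟨FreeLieAlgebra.quotientEquivProd ℂ, FreeLieAlgebra.toProd_sum ℂ,
    FreeLieAlgebra.toProd_of_zero ℂ, FreeLieAlgebra.toProd_of_one ℂ⟩
end

section
/- For every integer n ≥ 0, a homogeneous polynomial F ∈ ℂ[λ,μ] of degree 2n is an associator polynomial (i.e. satisfies F(λ,μ) = F(μ,λ) and F(λ,μ) = F(λ,−λ−μ) identically) if and only if there exist complex numbers β_0, β_1, …, β_{⌊n/3⌋} such that F(λ,μ) = ∑_{k=0}^{⌊n/3⌋} β_k · λ^{2k} μ^{2k} (λ+μ)^{2k} (λ² + λμ + μ²)^{n−3k}. -/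
open MvPolynomial

namespace AssocAux

noncomputable def P : MvPolynomial (Fin 2) ℂ := X 0 ^ 2 + X 0 * X 1 + X 1 ^ 2
noncomputable def Q : MvPolynomial (Fin 2) ℂ := X 0 * X 1 * (X 0 + X 1)
noncomputable def rts : Fin 3 → MvPolynomial (Fin 2) ℂ := ![X 0, X 1, - X 0 - X 1]

lemma hP : P.IsHomogeneous 2 := by
  have h1 : (X 0 ^ 2 : MvPolynomial (Fin 2) ℂ).IsHomogeneous 2 := isHomogeneous_X_pow _ _
  have h2 : (X 0 * X 1 : MvPolynomial (Fin 2) ℂ).IsHomogeneous 2 :=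
    (isHomogeneous_X _ _).mul (isHomogeneous_X _ _)
  have h3 : (X 1 ^ 2 : MvPolynomial (Fin 2) ℂ).IsHomogeneous 2 := isHomogeneous_X_pow _ _
  exact (h1.add h2).add h3

lemma hQ : Q.IsHomogeneous 3 := by
  have h1 : (X 0 * X 1 : MvPolynomial (Fin 2) ℂ).IsHomogeneous 2 :=
    (isHomogeneous_X _ _).mul (isHomogeneous_X _ _)
  have h2 : (X 0 + X 1 : MvPolynomial (Fin 2) ℂ).IsHomogeneous 1 :=
    (isHomogeneous_X _ _).add (isHomogeneous_X _ _)
  exact h1.mul h2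

lemma esymm1 : MvPolynomial.esymm (Fin 3) ℂ 1 = X 0 + X 1 + X 2 := by
  rw [esymm_one, Fin.sum_univ_three]

lemma esymm2 : MvPolynomial.esymm (Fin 3) ℂ 2 = X 0 * X 1 + X 0 * X 2 + X 1 * X 2 := by
  rw [esymm]
  have h : (Finset.powersetCard 2 (Finset.univ : Finset (Fin 3)))
      = {{0,1},{0,2},{1,2}} := by decide
  rw [h, Finset.sum_insert (by decide), Finset.sum_insert (by decide), Finset.sum_singleton]
  rw [show ({0,1} : Finset (Fin 3)) = insert 0 {1} from rfl, Finset.prod_insert (by decide),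
    Finset.prod_singleton]
  rw [show ({0,2} : Finset (Fin 3)) = insert 0 {2} from rfl, Finset.prod_insert (by decide),
    Finset.prod_singleton]
  rw [show ({1,2} : Finset (Fin 3)) = insert 1 {2} from rfl, Finset.prod_insert (by decide),
    Finset.prod_singleton]
  ring

lemma esymm3 : MvPolynomial.esymm (Fin 3) ℂ 3 = X 0 * X 1 * X 2 := by
  rw [esymm]
  have h : (Finset.powersetCard 3 (Finset.univ : Finset (Fin 3)))
      = {{0,1,2}} := by decide
  rw [h, Finset.sum_singleton,
    show ({0,1,2} : Finset (Fin 3)) = insert 0 (insert 1 {2}) from rfl,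
    Finset.prod_insert (by decide), Finset.prod_insert (by decide), Finset.prod_singleton]
  ring

lemma comp_inv {F : MvPolynomial (Fin 2) ℂ} {f g : Fin 2 → MvPolynomial (Fin 2) ℂ}
    (hf : aeval f F = F) (hg : aeval g F = F) :
    aeval (fun i => aeval f (g i)) F = F := by
  rw [← comp_aeval_apply, hg, hf]

lemma pair_inv (F : MvPolynomial (Fin 2) ℂ)
    (h1 : aeval (fun i : Fin 2 => if i = 0 then (X 1 : MvPolynomial (Fin 2) ℂ) else X 0) F = F)
    (h2 : aeval (fun i : Fin 2 => if i = 0 then (X 0 : MvPolynomial (Fin 2) ℂ) else - X 0 - X 1)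
      F = F)
    (a b : Fin 3) (hab : a ≠ b) : aeval ![rts a, rts b] F = F := by
  have A01 : aeval ![(X 0 : MvPolynomial (Fin 2) ℂ), X 1] F = F := by
    rw [show (![(X 0 : MvPolynomial (Fin 2) ℂ), X 1] : Fin 2 → _) = X by
      funext i; fin_cases i <;> rfl]
    exact aeval_X_left_apply F
  have A10 : aeval ![(X 1 : MvPolynomial (Fin 2) ℂ), X 0] F = F := by
    rw [show (![(X 1 : MvPolynomial (Fin 2) ℂ), X 0] : Fin 2 → _)
        = (fun i : Fin 2 => if i = 0 then (X 1 : MvPolynomial (Fin 2) ℂ) else X 0) by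
      funext i; fin_cases i <;> simp]
    exact h1
  have A02 : aeval ![(X 0 : MvPolynomial (Fin 2) ℂ), - X 0 - X 1] F = F := by
    rw [show (![(X 0 : MvPolynomial (Fin 2) ℂ), - X 0 - X 1] : Fin 2 → _)
        = (fun i : Fin 2 => if i = 0 then (X 0 : MvPolynomial (Fin 2) ℂ) else - X 0 - X 1) by
      funext i; fin_cases i <;> simp]
    exact h2
  have A12 : aeval ![(X 1 : MvPolynomial (Fin 2) ℂ), - X 0 - X 1] F = F := by
    have h := comp_inv A10 A02
    rwa [show (fun i : Fin 2 => aeval ![(X 1 : MvPolynomial (Fin 2) ℂ), X 0]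
        (![(X 0 : MvPolynomial (Fin 2) ℂ), - X 0 - X 1] i))
        = ![(X 1 : MvPolynomial (Fin 2) ℂ), - X 0 - X 1] by
      funext i; fin_cases i <;> simp <;> ring] at h
  have A20 : aeval ![(- X 0 - X 1 : MvPolynomial (Fin 2) ℂ), X 0] F = F := by
    have h := comp_inv A02 A10
    rwa [show (fun i : Fin 2 => aeval ![(X 0 : MvPolynomial (Fin 2) ℂ), - X 0 - X 1]
        (![(X 1 : MvPolynomial (Fin 2) ℂ), X 0] i))
        = ![(- X 0 - X 1 : MvPolynomial (Fin 2) ℂ), X 0] by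
      funext i; fin_cases i <;> simp <;> ring] at h
  have A21 : aeval ![(- X 0 - X 1 : MvPolynomial (Fin 2) ℂ), X 1] F = F := by
    have h := comp_inv A10 A20
    rwa [show (fun i : Fin 2 => aeval ![(X 1 : MvPolynomial (Fin 2) ℂ), X 0]
        (![(- X 0 - X 1 : MvPolynomial (Fin 2) ℂ), X 0] i))
        = ![(- X 0 - X 1 : MvPolynomial (Fin 2) ℂ), X 1] by
      funext i; fin_cases i <;> simp <;> ring] at h
  fin_cases a <;> fin_cases b <;>
    first
      | exact absurd rfl hab
      | simpa [rts] using A01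
      | simpa [rts] using A10
      | simpa [rts] using A02
      | simpa [rts] using A12
      | simpa [rts] using A20
      | simpa [rts] using A21

end AssocAux

open AssocAux in
/-- Proposition 4.10a: a homogeneous polynomial `F ∈ ℂ[λ,μ]` of degree `2n`
satisfies `F(λ,μ) = F(μ,λ)` and `F(λ,μ) = F(λ,−λ−μ)` if and only if
`F = ∑_{k=0}^{⌊n/3⌋} βₖ · λ^{2k} μ^{2k} (λ+μ)^{2k} (λ² + λμ + μ²)^{n−3k}`. -/
theorem associator_polynomial_even (n : ℕ) (F : MvPolynomial (Fin 2) ℂ)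
    (hF : F.IsHomogeneous (2 * n)) :
    (aeval (fun i : Fin 2 => if i = 0 then (X 1 : MvPolynomial (Fin 2) ℂ) else X 0) F = F ∧
     aeval (fun i : Fin 2 => if i = 0 then (X 0 : MvPolynomial (Fin 2) ℂ) else - X 0 - X 1) F
       = F)
    ↔ ∃ β : ℕ → ℂ,
        F = ∑ k ∈ Finset.range (n / 3 + 1),
          C (β k) * X 0 ^ (2 * k) * X 1 ^ (2 * k) * (X 0 + X 1) ^ (2 * k) *
            (X 0 ^ 2 + X 0 * X 1 + X 1 ^ 2) ^ (n - 3 * k) := by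
  have h10 : ((1 : Fin 2) = 0) = False := by simp
  constructor
  · rintro ⟨h1, h2⟩
    classical
    have hpair := pair_inv F h1 h2
    set Gs : MvPolynomial (Fin 3) ℂ :=
      ∑ g : Equiv.Perm (Fin 3), rename g (rename Fin.castSucc F) with hGs
    have hterm : ∀ g : Equiv.Perm (Fin 3),
        aeval rts (rename g (rename Fin.castSucc F)) = F := by
      intro g
      rw [rename_rename, aeval_rename]
      rw [show (rts ∘ (⇑g ∘ Fin.castSucc)) = ![rts (g 0), rts (g 1)] by
        funext i; fin_cases i <;> rfl]
      exact hpair _ _ (g.injective.ne (by decide))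
    have hGsym : ((6 : ℂ)⁻¹ • Gs).IsSymmetric := by
      refine MvPolynomial.IsSymmetric.smul _ ?_
      intro e
      rw [hGs, map_sum]
      simp only [rename_rename]
      exact Fintype.sum_equiv (Equiv.mulLeft e)
        (fun g => rename (⇑e ∘ ⇑g ∘ Fin.castSucc) F)
        (fun g => rename (⇑g ∘ Fin.castSucc) F)
        (fun g => by
          show _ = rename (⇑(e * g) ∘ Fin.castSucc) F
          rw [Equiv.Perm.coe_mul]; rfl)
    have hPhiG : aeval rts ((6 : ℂ)⁻¹ • Gs) = F := by
      rw [map_smul, hGs, map_sum]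
      simp only [hterm]
      rw [Finset.sum_const, Finset.card_univ]
      have hc : Fintype.card (Equiv.Perm (Fin 3)) = 6 := by
        simp [Fintype.card_perm]; rfl
      rw [hc, ← Nat.cast_smul_eq_nsmul ℂ, smul_smul]
      norm_num
    obtain ⟨H, hH⟩ := esymmAlgHom_surjective (σ := Fin 3) (R := ℂ) (n := 3) (by simp)
      ⟨_, (mem_symmetricSubalgebra _).2 hGsym⟩
    have hHG : aeval (fun i : Fin 3 => esymm (Fin 3) ℂ ((i : ℕ) + 1)) H = (6 : ℂ)⁻¹ • Gs := by
      have h := congrArg Subtype.val hH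
      rwa [esymmAlgHom_apply] at h
    have hv : (fun i : Fin 3 => aeval rts (esymm (Fin 3) ℂ ((i : ℕ) + 1)))
        = ![0, -P, -Q] := by
      funext i
      fin_cases i
      · show aeval rts (esymm (Fin 3) ℂ 1) = 0
        rw [esymm1]; simp [rts]
      · show aeval rts (esymm (Fin 3) ℂ 2) = -P
        rw [esymm2]; simp [rts, P]; ring
      · show aeval rts (esymm (Fin 3) ℂ 3) = -Q
        rw [esymm3]; simp [rts, Q]; ring
    have hFH : F = aeval ![0, -P, -Q] H := by
      rw [← hPhiG, ← hHG, comp_aeval_apply, hv]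
    let S : Submodule ℂ (MvPolynomial (Fin 2) ℂ) :=
      { carrier := {G | ∃ β : ℕ → ℂ, G = ∑ k ∈ Finset.range (n / 3 + 1),
          C (β k) * X 0 ^ (2 * k) * X 1 ^ (2 * k) * (X 0 + X 1) ^ (2 * k) *
            (X 0 ^ 2 + X 0 * X 1 + X 1 ^ 2) ^ (n - 3 * k)}
        add_mem' := by
          rintro a b ⟨β₁, rfl⟩ ⟨β₂, rfl⟩
          refine ⟨fun k => β₁ k + β₂ k, ?_⟩
          rw [← Finset.sum_add_distrib]
          exact Finset.sum_congr rfl fun k _ => by rw [map_add]; ring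
        zero_mem' := ⟨fun _ => 0, by simp⟩
        smul_mem' := by
          rintro c a ⟨β, rfl⟩
          refine ⟨fun k => c * β k, ?_⟩
          rw [Finset.smul_sum]
          exact Finset.sum_congr rfl fun k _ => by
            rw [map_mul, smul_eq_C_mul]; ring }
    have main : ∀ H' : MvPolynomial (Fin 3) ℂ,
        homogeneousComponent (2 * n) (aeval ![0, -P, -Q] H') ∈ S := by
      intro H'
      induction H' using MvPolynomial.induction_on' with
      | add p q hp hq => rw [map_add, map_add]; exact S.add_mem hp hq
      | monomial d c =>
        rw [aeval_monomial, Finsupp.prod_fintype _ _ (fun i => pow_zero _),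
          Fin.prod_univ_three,
          show (![0, -P, -Q] : Fin 3 → MvPolynomial (Fin 2) ℂ) 0 = 0 from rfl,
          show (![0, -P, -Q] : Fin 3 → MvPolynomial (Fin 2) ℂ) 1 = -P from rfl,
          show (![0, -P, -Q] : Fin 3 → MvPolynomial (Fin 2) ℂ) 2 = -Q from rfl]
        by_cases hd0 : d 0 = 0
        · rw [hd0, pow_zero, one_mul, algebraMap_eq]
          have hT : (C c * ((-P) ^ d 1 * (-Q) ^ d 2)).IsHomogeneous
              (2 * d 1 + 3 * d 2) := ((hP.neg.pow _).mul (hQ.neg.pow _)).C_mul c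
          rw [homogeneousComponent_of_mem ((mem_homogeneousSubmodule _ _).2 hT)]
          split_ifs with hdeg
          · obtain ⟨k, hk⟩ : ∃ k, d 2 = 2 * k := ⟨d 2 / 2, by omega⟩
            refine ⟨fun j => if j = k then c * (-1 : ℂ) ^ (n - 3 * k) else 0, ?_⟩
            rw [Finset.sum_eq_single_of_mem k (Finset.mem_range.2 (by omega))
              (fun j _ hj => by
                simp only [if_neg hj, map_zero, zero_mul])]
            simp only [if_pos rfl, if_true]
            rw [hk, show d 1 = n - 3 * k by omega, (even_two_mul k).neg_pow]
            rw [map_mul, map_pow, map_neg, map_one, neg_pow]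
            rw [show Q = X 0 * X 1 * (X 0 + X 1) from rfl, mul_pow, mul_pow,
              show P = X 0 ^ 2 + X 0 * X 1 + X 1 ^ 2 from rfl]
            ring
          · exact S.zero_mem
        · rw [zero_pow hd0, zero_mul, zero_mul, mul_zero, map_zero]
          exact S.zero_mem
    have hmem := main H
    rw [← hFH, homogeneousComponent_of_mem ((mem_homogeneousSubmodule _ _).2 hF),
      if_pos rfl] at hmem
    exact hmem
  · rintro ⟨β, rfl⟩
    constructor
    · rw [map_sum]
      refine Finset.sum_congr rfl fun k _ => ?_
      simp only [map_mul, map_pow, map_add, aeval_X, aeval_C, algebraMap_eq, h10, if_true,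
        if_false]
      ring
    · rw [map_sum]
      refine Finset.sum_congr rfl fun k _ => ?_
      simp only [map_mul, map_pow, map_add, aeval_X, aeval_C, algebraMap_eq, h10, if_true,
        if_false]
      have e1 : ((- X 0 - X 1 : MvPolynomial (Fin 2) ℂ)) ^ (2*k) = (X 0 + X 1) ^ (2*k) := by
        rw [show (- X 0 - X 1 : MvPolynomial (Fin 2) ℂ) = -(X 0 + X 1) by ring,
          (even_two_mul k).neg_pow]
      have e2 : ((X 0 + (- X 0 - X 1) : MvPolynomial (Fin 2) ℂ)) ^ (2*k) = (X 1 : MvPolynomial (Fin 2) ℂ) ^ (2*k) := by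
        rw [show (X 0 + (- X 0 - X 1) : MvPolynomial (Fin 2) ℂ) = -(X 1) by ring,
          (even_two_mul k).neg_pow]
      have e3 : ((X 0) ^ 2 + X 0 * (- X 0 - X 1) + (- X 0 - X 1) ^ 2 : MvPolynomial (Fin 2) ℂ)
          = X 0 ^ 2 + X 0 * X 1 + X 1 ^ 2 := by ring
      rw [e1, e2, e3]; ring
end

section
/- For every integer n ≥ 1, a homogeneous polynomial F ∈ ℂ[λ,μ] of degree 2n+1 is an associator polynomial (i.e. satisfies F(λ,μ) = F(μ,λ) and F(λ,μ) = F(λ,−λ−μ) identically) if and only if there exist complex numbers β̃_0, β̃_1, …, β̃_{⌊(n−1)/3⌋} such that F(λ,μ) = ∑_{k=0}^{⌊(n−1)/3⌋} β̃_k · λ^{2k+1} μ^{2k+1} (λ+μ)^{2k+1} (λ² + λμ + μ²)^{n−3k−1}. -/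
open MvPolynomial

/-!
The substitutions `(λ, μ) ↦ (μ, λ)` and `(λ, μ) ↦ (λ, -λ-μ)` generate an action of `S₃` that
permutes the lines `λ = 0`, `μ = 0`, `λ + μ = 0` up to sign, and its invariants are spanned by the
monomials in `p = λ² + λμ + μ²` and `q = λμ(λ + μ)`. Given an invariant form `F` of degree `d`,
subtract `F(0,1) p^(d/2)`; for odd `d` nothing is subtracted, since `F(0,1) = F(0,-1) = -F(0,1)`.
The remainder vanishes at `(0,1)`, hence by invariance also at `(1,0)` and `(1,-1)`, so it is `q`
times an invariant form of degree `d - 3`, and induction on `d` concludes.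
-/

namespace MvPolynomial

section CommSemiring

variable {σ R : Type*} [CommSemiring R]

theorem IsHomogeneous.divMonomial {φ : MvPolynomial σ R} {n : ℕ} (hφ : φ.IsHomogeneous n)
    (s : σ →₀ ℕ) : (φ.divMonomial s).IsHomogeneous (n - s.degree) := by
  intro m hm
  rw [coeff_divMonomial] at hm
  have hsm := hφ hm
  rw [map_add] at hsm
  rw [Finsupp.degree_eq_weight_one]
  exact Nat.eq_sub_of_add_eq' hsm

theorem eval_aeval {τ : Type*} (x : τ → R) (φ : σ → MvPolynomial τ R) (p : MvPolynomial σ R) :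
    eval x (aeval φ p) = eval (fun i => eval x (φ i)) p := by
  simp only [← coe_aeval_eq_eval]
  exact comp_aeval_apply φ (aeval x) p

variable {F : MvPolynomial (Fin 2) R} {d : ℕ}

theorem IsHomogeneous.modMonomial_single_zero_one (hF : F.IsHomogeneous d) :
    F.modMonomial (Finsupp.single 0 1) =
      monomial (Finsupp.single 1 d) (coeff (Finsupp.single 1 d) F) := by
  ext m
  rw [coeff_monomial]
  by_cases hm : Finsupp.single 0 1 ≤ m
  · rw [coeff_modMonomial_of_le _ hm, if_neg]
    rintro rfl
    simpa using Finsupp.single_le_iff.mp hm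
  · rw [coeff_modMonomial_of_not_le _ hm]
    have hm0 : m 0 = 0 := by simpa [Finsupp.single_le_iff] using hm
    split_ifs with h
    · rw [h]
    · refine hF.coeff_eq_zero ?_
      rw [Finsupp.degree_eq_sum, Fin.sum_univ_two]
      contrapose! h
      ext i; fin_cases i <;> simp <;> omega

theorem IsHomogeneous.eval_zero_left (hF : F.IsHomogeneous d) (v : R) :
    eval ![0, v] F = coeff (Finsupp.single 1 d) F * v ^ d := by
  conv_lhs => rw [← divMonomial_add_modMonomial_single F 0, hF.modMonomial_single_zero_one]
  simp [eval_monomial, Finsupp.prod_single_index]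

theorem IsHomogeneous.exists_eq_X_zero_mul (hF : F.IsHomogeneous d) (h : eval ![0, 1] F = 0) :
    ∃ G : MvPolynomial (Fin 2) R, G.IsHomogeneous (d - 1) ∧ F = X 0 * G := by
  refine ⟨F.divMonomial (Finsupp.single 0 1), ?_, ?_⟩
  · simpa [Finsupp.degree_single] using hF.divMonomial (Finsupp.single 0 1)
  rw [hF.eval_zero_left, one_pow, mul_one] at h
  conv_lhs => rw [← divMonomial_add_modMonomial_single F 0, hF.modMonomial_single_zero_one, h]
  simp

/-- `h` says that `F` vanishes at the image of `(0, 1)` under the linear involution `φ`. -/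
theorem IsHomogeneous.exists_eq_mul_of_involutive {φ : Fin 2 → MvPolynomial (Fin 2) R}
    (hφ : ∀ i, (φ i).IsHomogeneous 1) (hinv : ∀ i, MvPolynomial.aeval φ (φ i) = X i)
    (hF : F.IsHomogeneous d) (h : eval (fun i => eval ![0, 1] (φ i)) F = 0) :
    ∃ G : MvPolynomial (Fin 2) R, G.IsHomogeneous (d - 1) ∧ F = φ 0 * G := by
  have hFφ : (MvPolynomial.aeval φ F).IsHomogeneous d := by simpa using hF.aeval φ hφ
  obtain ⟨G, hG, hFG⟩ := hFφ.exists_eq_X_zero_mul (by rwa [eval_aeval])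
  refine ⟨MvPolynomial.aeval φ G, by simpa using hG.aeval φ hφ, ?_⟩
  calc F = MvPolynomial.aeval φ (MvPolynomial.aeval φ F) := by
        rw [comp_aeval_apply, _root_.funext hinv, aeval_X_left_apply]
    _ = φ 0 * MvPolynomial.aeval φ G := by rw [hFG, map_mul, aeval_X]

theorem IsHomogeneous.exists_eq_X_one_mul (hF : F.IsHomogeneous d) (h : eval ![1, 0] F = 0) :
    ∃ G : MvPolynomial (Fin 2) R, G.IsHomogeneous (d - 1) ∧ F = X 1 * G :=
  hF.exists_eq_mul_of_involutive (φ := ![X 1, X 0])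
    (fun i => by fin_cases i <;> exact isHomogeneous_X R _)
    (fun i => by fin_cases i <;> simp) (by convert h using 3; funext i; fin_cases i <;> simp)

end CommSemiring

variable {R : Type*} [CommRing R] {F : MvPolynomial (Fin 2) R} {d : ℕ}

theorem IsHomogeneous.exists_eq_X_zero_add_X_one_mul (hF : F.IsHomogeneous d)
    (h : eval ![1, -1] F = 0) :
    ∃ G : MvPolynomial (Fin 2) R, G.IsHomogeneous (d - 1) ∧ F = (X 0 + X 1) * G :=
  hF.exists_eq_mul_of_involutive (φ := ![X 0 + X 1, -X 1])
    (fun i => by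
      fin_cases i
      exacts [(isHomogeneous_X R 0).add (isHomogeneous_X R 1), (isHomogeneous_X R 1).neg])
    (fun i => by fin_cases i <;> simp) (by convert h using 3; funext i; fin_cases i <;> simp)

end MvPolynomial

noncomputable section

namespace AssociatorPolynomial

variable (R : Type*) [CommRing R]

def subalgebra : Subalgebra R (MvPolynomial (Fin 2) R) :=
  AlgHom.equalizer (aeval fun i : Fin 2 => if i = 0 then X 1 else X 0) (AlgHom.id R _) ⊓
    AlgHom.equalizer (aeval fun i : Fin 2 => if i = 0 then X 0 else -X 0 - X 1) (AlgHom.id R _)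

def quadratic : MvPolynomial (Fin 2) R := X 0 ^ 2 + X 0 * X 1 + X 1 ^ 2

def cubic : MvPolynomial (Fin 2) R := X 0 * X 1 * (X 0 + X 1)

variable {R}

def evenSum (m : ℕ) (β : ℕ → R) : MvPolynomial (Fin 2) R :=
  ∑ k ∈ Finset.range (m / 3 + 1), C (β k) * cubic R ^ (2 * k) * quadratic R ^ (m - 3 * k)

def oddSum (n : ℕ) (β : ℕ → R) : MvPolynomial (Fin 2) R :=
  ∑ k ∈ Finset.range ((n - 1) / 3 + 1),
    C (β k) * cubic R ^ (2 * k + 1) * quadratic R ^ (n - 3 * k - 1)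

theorem mem_subalgebra {F : MvPolynomial (Fin 2) R} :
    F ∈ subalgebra R ↔
      aeval (fun i : Fin 2 => if i = 0 then X 1 else X 0) F = F ∧
        aeval (fun i : Fin 2 => if i = 0 then X 0 else -X 0 - X 1) F = F :=
  Iff.rfl

theorem quadratic_mem : quadratic R ∈ subalgebra R := by
  simp only [mem_subalgebra, quadratic, map_add, map_mul, map_pow, aeval_X]
  constructor <;> simp <;> ring

theorem cubic_mem : cubic R ∈ subalgebra R := by
  simp only [mem_subalgebra, cubic, map_add, map_mul, aeval_X]
  constructor <;> simp <;> ring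

theorem isHomogeneous_quadratic : (quadratic R).IsHomogeneous 2 :=
  (((isHomogeneous_X R 0).pow 2).add ((isHomogeneous_X R 0).mul (isHomogeneous_X R 1))).add
    ((isHomogeneous_X R 1).pow 2)

theorem isHomogeneous_cubic : (cubic R).IsHomogeneous 3 :=
  ((isHomogeneous_X R 0).mul (isHomogeneous_X R 1)).mul
    ((isHomogeneous_X R 0).add (isHomogeneous_X R 1))

theorem cubic_ne_zero [Nontrivial R] [NoZeroDivisors R] : cubic R ≠ 0 :=
  mul_ne_zero (mul_ne_zero (X_ne_zero 0) (X_ne_zero 1))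
    fun h => by simpa using congrArg (eval ![1, 0]) h

theorem oddSum_mem (n : ℕ) (β : ℕ → R) : oddSum n β ∈ subalgebra R :=
  Subalgebra.sum_mem _ fun k _ =>
    mul_mem (mul_mem (Subalgebra.algebraMap_mem _ (β k)) (pow_mem cubic_mem _))
      (pow_mem quadratic_mem _)

theorem oddSum_eq_cubic_mul_evenSum (n : ℕ) (β : ℕ → R) :
    oddSum n β = cubic R * evenSum (n - 1) β := by
  rw [oddSum, evenSum, Finset.mul_sum]
  refine Finset.sum_congr rfl fun k _ => ?_
  rw [show n - 3 * k - 1 = n - 1 - 3 * k by omega]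
  ring

theorem evenSum_of_lt_three {m : ℕ} (hm : m < 3) (β : ℕ → R) :
    evenSum m β = C (β 0) * quadratic R ^ m := by
  simp [evenSum, Nat.div_eq_of_lt hm]

theorem evenSum_of_three_le {m : ℕ} (hm : 3 ≤ m) (β : ℕ → R) :
    evenSum m β =
      C (β 0) * quadratic R ^ m + cubic R ^ 2 * evenSum (m - 3) (fun k => β (k + 1)) := by
  rw [evenSum, evenSum, show m / 3 = (m - 3) / 3 + 1 by omega, Finset.sum_range_succ', add_comm,
    Finset.mul_sum]
  refine congrArg₂ (· + ·) (by simp) (Finset.sum_congr rfl fun k _ => ?_)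
  rw [show m - 3 * (k + 1) = m - 3 - 3 * k by omega]
  ring

variable {F : MvPolynomial (Fin 2) R} {d : ℕ}

theorem eval_swap (hF : F ∈ subalgebra R) (u v : R) : eval ![u, v] F = eval ![v, u] F := by
  conv_lhs => rw [← (mem_subalgebra.mp hF).1]
  rw [eval_aeval]
  congr 2; funext i; fin_cases i <;> simp

theorem eval_neg_sub (hF : F ∈ subalgebra R) (u v : R) :
    eval ![u, v] F = eval ![u, -u - v] F := by
  conv_rhs => rw [← (mem_subalgebra.mp hF).2]
  rw [eval_aeval]
  congr 2; funext i; fin_cases i <;> simp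

variable [IsDomain R]

theorem mem_of_cubic_mul_mem {K : MvPolynomial (Fin 2) R} (h : cubic R * K ∈ subalgebra R) :
    K ∈ subalgebra R := by
  have hq := mem_subalgebra.mp (cubic_mem (R := R))
  rw [mem_subalgebra, map_mul, map_mul, hq.1, hq.2] at h
  exact mem_subalgebra.mpr
    ⟨mul_left_cancel₀ cubic_ne_zero h.1, mul_left_cancel₀ cubic_ne_zero h.2⟩

theorem exists_eq_cubic_mul (hF : F ∈ subalgebra R) (hd : F.IsHomogeneous d)
    (h01 : eval ![0, 1] F = 0) :
    ∃ K ∈ subalgebra R, K.IsHomogeneous (d - 3) ∧ F = cubic R * K := by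
  have h10 : eval ![1, 0] F = 0 := by rw [eval_swap hF, h01]
  have h1m1 : eval ![1, -1] F = 0 := by rw [← h10, eval_neg_sub hF 1 0, sub_zero]
  obtain ⟨A, hA, rfl⟩ := hd.exists_eq_X_zero_mul h01
  obtain ⟨B, hB, rfl⟩ := hA.exists_eq_X_one_mul (by simpa using h10)
  obtain ⟨K, hK, rfl⟩ := hB.exists_eq_X_zero_add_X_one_mul (by simpa using h1m1)
  have hcubic : X 0 * (X 1 * ((X 0 + X 1) * K)) = cubic R * K := by rw [cubic]; ring
  rw [hcubic] at hF ⊢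
  exact ⟨K, mem_of_cubic_mul_mem hF, by simpa [Nat.sub_sub] using hK, rfl⟩

theorem eq_zero_of_lt_three (hF : F ∈ subalgebra R) (hd : F.IsHomogeneous d) (hd3 : d < 3)
    (h01 : eval ![0, 1] F = 0) : F = 0 := by
  obtain ⟨K, -, hK, rfl⟩ := exists_eq_cubic_mul hF hd h01
  by_contra hne
  have := hd.inj_right (isHomogeneous_cubic.mul hK) hne
  omega

theorem eval_zero_one_eq_zero_of_odd [NeZero (2 : R)] (hF : F ∈ subalgebra R)
    (hd : F.IsHomogeneous d) (hodd : Odd d) : eval ![0, 1] F = 0 := by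
  have h := eval_neg_sub hF 0 1
  rw [hd.eval_zero_left, hd.eval_zero_left, neg_zero, zero_sub, hodd.neg_one_pow, one_pow,
    mul_one, mul_neg_one, eq_neg_iff_add_eq_zero, ← two_mul] at h
  rw [hd.eval_zero_left, one_pow, mul_one]
  exact (mul_eq_zero.mp h).resolve_left two_ne_zero

variable [NeZero (2 : R)]

theorem exists_eq_cubic_mul_of_odd {n : ℕ} (hF : F ∈ subalgebra R)
    (hd : F.IsHomogeneous (2 * n + 1)) :
    ∃ G ∈ subalgebra R, G.IsHomogeneous (2 * (n - 1)) ∧ F = cubic R * G := by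
  obtain ⟨G, hG, hGd, rfl⟩ :=
    exists_eq_cubic_mul hF hd (eval_zero_one_eq_zero_of_odd hF hd (odd_two_mul_add_one n))
  exact ⟨G, hG, by rwa [show 2 * n + 1 - 3 = 2 * (n - 1) by omega] at hGd, rfl⟩

theorem exists_eq_evenSum (m : ℕ) (hF : F ∈ subalgebra R) (hd : F.IsHomogeneous (2 * m)) :
    ∃ β : ℕ → R, F = evenSum m β := by
  induction m using Nat.strong_induction_on generalizing F with
  | _ m ih =>
  set γ := eval ![0, 1] F
  have hH : F - C γ * quadratic R ^ m ∈ subalgebra R :=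
    sub_mem hF (mul_mem (Subalgebra.algebraMap_mem _ γ) (pow_mem quadratic_mem m))
  have hHd : (F - C γ * quadratic R ^ m).IsHomogeneous (2 * m) :=
    hd.sub ((isHomogeneous_quadratic.pow m).C_mul γ)
  have hH01 : eval ![0, 1] (F - C γ * quadratic R ^ m) = 0 := by simp [γ, quadratic]
  obtain ⟨K, hK, hKd, hHK⟩ := exists_eq_cubic_mul hH hHd hH01
  rcases lt_or_ge m 3 with hm | hm
  · refine ⟨fun _ => γ, ?_⟩
    rw [evenSum_of_lt_three hm, ← sub_eq_zero]
    rcases (show m ≤ 1 ∨ m = 2 by omega) with hm | rfl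
    · exact eq_zero_of_lt_three hH hHd (by omega) hH01
    · have hKd : K.IsHomogeneous 1 := hKd
      rw [hHK, eq_zero_of_lt_three hK hKd (by norm_num)
        (eval_zero_one_eq_zero_of_odd hK hKd odd_one), mul_zero]
  · obtain ⟨G, hG, hGd, rfl⟩ := exists_eq_cubic_mul_of_odd (n := m - 2) hK
      (by rwa [show 2 * (m - 2) + 1 = 2 * m - 3 by omega])
    obtain ⟨β, rfl⟩ := ih (m - 3) (by omega) hG (by rwa [show m - 2 - 1 = m - 3 by omega] at hGd)
    refine ⟨fun k => if k = 0 then γ else β (k - 1), ?_⟩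
    simp only [evenSum_of_three_le hm, if_pos, Nat.add_one_ne_zero, if_false, Nat.add_sub_cancel]
    linear_combination hHK

theorem exists_eq_oddSum (n : ℕ) (hF : F ∈ subalgebra R) (hd : F.IsHomogeneous (2 * n + 1)) :
    ∃ β : ℕ → R, F = oddSum n β := by
  obtain ⟨G, hG, hGd, rfl⟩ := exists_eq_cubic_mul_of_odd hF hd
  obtain ⟨β, rfl⟩ := exists_eq_evenSum (n - 1) hG hGd
  exact ⟨β, (oddSum_eq_cubic_mul_evenSum n β).symm⟩

end AssociatorPolynomial

end

theorem associator_polynomial_odd_general (n : ℕ) (F : MvPolynomial (Fin 2) ℂ)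
    (hF : F.IsHomogeneous (2 * n + 1)) :
    (aeval (fun i : Fin 2 => if i = 0 then (X 1 : MvPolynomial (Fin 2) ℂ) else X 0) F = F ∧
     aeval (fun i : Fin 2 => if i = 0 then (X 0 : MvPolynomial (Fin 2) ℂ) else - X 0 - X 1) F
       = F)
    ↔ ∃ β : ℕ → ℂ,
        F = ∑ k ∈ Finset.range ((n - 1) / 3 + 1),
          C (β k) * X 0 ^ (2 * k + 1) * X 1 ^ (2 * k + 1) * (X 0 + X 1) ^ (2 * k + 1) *
            (X 0 ^ 2 + X 0 * X 1 + X 1 ^ 2) ^ (n - 3 * k - 1) := by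
  have hsum (β : ℕ → ℂ) : ∑ k ∈ Finset.range ((n - 1) / 3 + 1),
      C (β k) * X 0 ^ (2 * k + 1) * X 1 ^ (2 * k + 1) * (X 0 + X 1) ^ (2 * k + 1) *
        (X 0 ^ 2 + X 0 * X 1 + X 1 ^ 2) ^ (n - 3 * k - 1) = AssociatorPolynomial.oddSum n β :=
    Finset.sum_congr rfl fun k _ => by
      rw [AssociatorPolynomial.cubic, AssociatorPolynomial.quadratic, mul_pow, mul_pow]
      ring
  simp only [← AssociatorPolynomial.mem_subalgebra, hsum]
  exact ⟨fun h => AssociatorPolynomial.exists_eq_oddSum n h hF,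
    fun ⟨β, hβ⟩ => hβ ▸ AssociatorPolynomial.oddSum_mem n β⟩

/-- Proposition 4.10b: for `n ≥ 1`, a homogeneous polynomial `F ∈ ℂ[λ,μ]` of
degree `2n+1` satisfies `F(λ,μ) = F(μ,λ)` and `F(λ,μ) = F(λ,−λ−μ)` if and only if
`F = ∑_{k=0}^{⌊(n−1)/3⌋} β̃ₖ · λ^{2k+1} μ^{2k+1} (λ+μ)^{2k+1} (λ² + λμ + μ²)^{n−3k−1}`. -/
theorem associator_polynomial_odd (n : ℕ) (hn : 1 ≤ n) (F : MvPolynomial (Fin 2) ℂ)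
    (hF : F.IsHomogeneous (2 * n + 1)) :
    (aeval (fun i : Fin 2 => if i = 0 then (X 1 : MvPolynomial (Fin 2) ℂ) else X 0) F = F ∧
     aeval (fun i : Fin 2 => if i = 0 then (X 0 : MvPolynomial (Fin 2) ℂ) else - X 0 - X 1) F
       = F)
    ↔ ∃ β : ℕ → ℂ,
        F = ∑ k ∈ Finset.range ((n - 1) / 3 + 1),
          C (β k) * X 0 ^ (2 * k + 1) * X 1 ^ (2 * k + 1) * (X 0 + X 1) ^ (2 * k + 1) *
            (X 0 ^ 2 + X 0 * X 1 + X 1 ^ 2) ^ (n - 3 * k - 1) :=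
  associator_polynomial_odd_general n F hF
end
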